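/- Let (W_∗, F^∗) and (W'_∗, F'^∗) be ℝ-mixed Hodge structures on finite-dimensional real vector spaces V and V', and let f : V → V' be a real linear map with f(W_i) ⊆ W'_i for all i and f_ℂ(F^p) ⊆ F'^p for all p, where f_ℂ = f ⊗ id_ℂ. Then f is strictly compatible with both filtrations: for every i, f(V) ∩ W'_i = f(W_i), and for every p, f_ℂ(V_ℂ) ∩ F'^p = f_ℂ(F^p). -/
import Mathlib


open TensorProduct

noncomputable section

namespace MHS

instance : RingHomSurjective (starRingEnd ℂ) :=
  ⟨fun x => ⟨star x, star_star x⟩⟩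

variable (V : Type*) [AddCommGroup V] [Module ℝ V]

/-- The inclusion `v ↦ 1 ⊗ v` of `V` into its complexification `ℂ ⊗[ℝ] V`. -/
def incl : V →ₗ[ℝ] ℂ ⊗[ℝ] V := TensorProduct.mk ℝ ℂ V 1

/-- Complex conjugation on the complexification `ℂ ⊗[ℝ] V`, as a
conjugate-linear (i.e. `starRingEnd ℂ`-semilinear) map. -/
def conjC : (ℂ ⊗[ℝ] V) →ₛₗ[starRingEnd ℂ] (ℂ ⊗[ℝ] V) where
  toFun := LinearMap.rTensor V (Complex.conjAe.toLinearMap : ℂ →ₗ[ℝ] ℂ)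
  map_add' := fun x y => map_add _ x y
  map_smul' := by
    intro c x
    induction x using TensorProduct.induction_on with
    | zero => simp
    | tmul a v =>
        simp only [TensorProduct.smul_tmul', LinearMap.rTensor_tmul, smul_eq_mul,
          AlgEquiv.toLinearMap_apply, map_mul, starRingEnd_apply]
        rfl
    | add x y hx hy =>
        simp only [smul_add, map_add]
        exact congrArg₂ (· + ·) hx hy

/-- The complexification `W ⊗ ℂ` of a real subspace `W ⊆ V`, as a complex
subspace of `ℂ ⊗[ℝ] V`. -/
def cx (W : Submodule ℝ V) : Submodule ℂ (ℂ ⊗[ℝ] V) :=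
  Submodule.span ℂ (incl V '' (W : Set V))

variable {V}

/-- `(W, F)` is an `ℝ`-mixed Hodge structure on `V`:  `W` is an increasing
exhaustive filtration of `V` by real subspaces, `F` a decreasing exhaustive
filtration of `ℂ ⊗[ℝ] V` by complex subspaces, and for every `n, p` the induced
filtration on `Gr^W_n = (W n ⊗ ℂ)/(W (n-1) ⊗ ℂ)` satisfies the weight `n`
Hodge decomposition conditions (expressed here at the level of preimages in
`W n ⊗ ℂ` of the relevant subspaces of the quotient). -/
structure IsRMHS (W : ℤ → Submodule ℝ V) (F : ℤ → Submodule ℂ (ℂ ⊗[ℝ] V)) : Prop where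
  monoW : Monotone W
  antiF : Antitone F
  w_bot : ∃ a : ℤ, ∀ i ≤ a, W i = ⊥
  w_top : ∃ b : ℤ, ∀ i, b ≤ i → W i = ⊤
  f_top : ∃ a : ℤ, ∀ p ≤ a, F p = ⊤
  f_bot : ∃ b : ℤ, ∀ p, b ≤ p → F p = ⊥
  gr_inf : ∀ n p : ℤ,
      ((F p ⊓ cx V (W n)) ⊔ cx V (W (n-1))) ⊓
        ((((F (n+1-p)).map (conjC V)) ⊓ cx V (W n)) ⊔ cx V (W (n-1)))
      = cx V (W (n-1))
  gr_sup : ∀ n p : ℤ,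
      (F p ⊓ cx V (W n)) ⊔ ((((F (n+1-p)).map (conjC V)) ⊓ cx V (W n)) ⊔ cx V (W (n-1)))
      = cx V (W n)

/-- The subspace `R^{p,q} = (W_{p+q} ⊗ ℂ) ∩ F^p`. -/
def Rpq (W : ℤ → Submodule ℝ V) (F : ℤ → Submodule ℂ (ℂ ⊗[ℝ] V)) (p q : ℤ) :
    Submodule ℂ (ℂ ⊗[ℝ] V) :=
  cx V (W (p + q)) ⊓ F p

/-- The subspace
`L^{p,q} = (W_{p+q} ⊗ ℂ) ∩ σ(F^q) + Σ_{i ≥ 2} (W_{p+q-i} ⊗ ℂ) ∩ σ(F^{q-i+1})`. -/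
def Lpq (W : ℤ → Submodule ℝ V) (F : ℤ → Submodule ℂ (ℂ ⊗[ℝ] V)) (p q : ℤ) :
    Submodule ℂ (ℂ ⊗[ℝ] V) :=
  (cx V (W (p + q)) ⊓ (F q).map (conjC V)) ⊔
    ⨆ i : ℤ, ⨆ _ : 2 ≤ i, (cx V (W (p + q - i)) ⊓ (F (q - i + 1)).map (conjC V))

/-- The Deligne subspace `I^{p,q} = R^{p,q} ∩ L^{p,q}`. -/
def Ipq (W : ℤ → Submodule ℝ V) (F : ℤ → Submodule ℂ (ℂ ⊗[ℝ] V)) (p q : ℤ) :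
    Submodule ℂ (ℂ ⊗[ℝ] V) :=
  Rpq W F p q ⊓ Lpq W F p q

section Aux

variable {V : Type*} [AddCommGroup V] [Module ℝ V]
variable {V' : Type*} [AddCommGroup V'] [Module ℝ V']

lemma incl_apply (v : V) : incl V v = (1 : ℂ) ⊗ₜ[ℝ] v := rfl

lemma conjC_tmul (c : ℂ) (v : V) :
    conjC V (c ⊗ₜ[ℝ] v) = (starRingEnd ℂ c) ⊗ₜ[ℝ] v := rfl

lemma baseChange_conjC (f : V →ₗ[ℝ] V') (x : ℂ ⊗[ℝ] V) :
    f.baseChange ℂ (conjC V x) = conjC V' (f.baseChange ℂ x) := by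
  induction x using TensorProduct.induction_on with
  | zero => simp
  | tmul c v => rw [conjC_tmul, LinearMap.baseChange_tmul, LinearMap.baseChange_tmul, conjC_tmul]
  | add x y hx hy => rw [map_add, map_add, map_add, hx, hy, map_add]

lemma cx_mono {S T : Submodule ℝ V} (hST : S ≤ T) : cx V S ≤ cx V T :=
  Submodule.span_mono (Set.image_mono hST)

lemma tmul_mem_cx {S : Submodule ℝ V} {v : V} (hv : v ∈ S) :
    (1 : ℂ) ⊗ₜ[ℝ] v ∈ cx V S :=
  Submodule.subset_span ⟨v, hv, rfl⟩

lemma cx_bot : cx V (⊥ : Submodule ℝ V) = ⊥ := by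
  apply le_antisymm _ bot_le
  rw [cx, Submodule.span_le]
  rintro x ⟨v, hv, rfl⟩
  have hv' : v = 0 := hv
  subst hv'
  simp only [incl_apply, TensorProduct.tmul_zero, SetLike.mem_coe, Submodule.zero_mem]

lemma cx_top : cx V (⊤ : Submodule ℝ V) = ⊤ := by
  rw [← top_le_iff]
  rintro x -
  show x ∈ cx V ⊤
  induction x using TensorProduct.induction_on with
  | zero => exact Submodule.zero_mem _
  | tmul c v =>
      have : c ⊗ₜ[ℝ] v = c • ((1 : ℂ) ⊗ₜ[ℝ] v) := by
        rw [TensorProduct.smul_tmul', smul_eq_mul, mul_one]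
      rw [this]
      exact Submodule.smul_mem _ _ (tmul_mem_cx trivial)
  | add x y hx hy => exact Submodule.add_mem _ hx hy


/-- The real-part projection `ℂ ⊗ V → V`. -/
def reP : ℂ ⊗[ℝ] V →ₗ[ℝ] V :=
  TensorProduct.lift ((LinearMap.lsmul ℝ V).comp Complex.reLm)

lemma reP_tmul (c : ℂ) (v : V) : reP (c ⊗ₜ[ℝ] v) = c.re • v := rfl

lemma reP_smul (c : ℂ) (x : ℂ ⊗[ℝ] V) :
    reP (c • x) = c.re • reP x + c.im • reP (Complex.I • x) := by
  induction x using TensorProduct.induction_on with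
  | zero => simp
  | tmul a v =>
      rw [TensorProduct.smul_tmul', TensorProduct.smul_tmul', smul_eq_mul, smul_eq_mul,
        reP_tmul, reP_tmul, reP_tmul, Complex.mul_re, Complex.mul_re]
      simp only [Complex.I_re, Complex.I_im, zero_mul, one_mul, zero_sub, sub_smul, smul_smul]
      ring_nf
      module
  | add x y hx hy =>
      simp only [smul_add, map_add, hx, hy]
      abel

lemma reP_mem_of_mem_cx {S : Submodule ℝ V} {x : ℂ ⊗[ℝ] V} (hx : x ∈ cx V S) :
    reP x ∈ S := by
  have H : reP x ∈ S ∧ reP (Complex.I • x) ∈ S := by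
    refine Submodule.span_induction ?_ ?_ ?_ ?_ hx
    · rintro y ⟨v, hv, rfl⟩
      rw [incl_apply]
      constructor
      · rw [reP_tmul]; simpa using hv
      · rw [TensorProduct.smul_tmul', smul_eq_mul, mul_one, reP_tmul]
        simp
    · simp
    · rintro y z - - ⟨h1, h2⟩ ⟨h3, h4⟩
      rw [smul_add]
      exact ⟨by rw [map_add]; exact S.add_mem h1 h3,
        by rw [map_add]; exact S.add_mem h2 h4⟩
    · rintro c y - ⟨h1, h2⟩
      constructor
      · rw [reP_smul]
        exact S.add_mem (S.smul_mem _ h1) (S.smul_mem _ h2)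
      · rw [smul_smul, reP_smul]
        exact S.add_mem (S.smul_mem _ h1) (S.smul_mem _ h2)
  exact H.1

lemma tmul_one_mem_cx_iff {S : Submodule ℝ V} {v : V} :
    (1 : ℂ) ⊗ₜ[ℝ] v ∈ cx V S ↔ v ∈ S := by
  constructor
  · intro hx
    have := reP_mem_of_mem_cx hx
    rwa [reP_tmul, Complex.one_re, one_smul] at this
  · exact tmul_mem_cx

lemma map_cx (f : V →ₗ[ℝ] V') (S : Submodule ℝ V) :
    (cx V S).map (f.baseChange ℂ) = cx V' (S.map f) := by
  rw [cx, Submodule.map_span, cx]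
  congr 1
  ext x
  constructor
  · rintro ⟨y, ⟨v, hv, rfl⟩, rfl⟩
    exact ⟨f v, ⟨v, hv, rfl⟩, by rw [incl_apply, incl_apply, LinearMap.baseChange_tmul]⟩
  · rintro ⟨w, ⟨v, hv, rfl⟩, rfl⟩
    exact ⟨incl V v, ⟨v, hv, rfl⟩, by rw [incl_apply, incl_apply, LinearMap.baseChange_tmul]⟩

end Aux

/-- Downward induction on integers. -/
lemma intDescend {P : ℤ → Prop} (b : ℤ) (base : ∀ p, b ≤ p → P p)
    (step : ∀ p, P (p + 1) → P p) : ∀ p, P p := by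
  have H : ∀ k : ℕ, ∀ p, b ≤ p + k → P p := by
    intro k
    induction k with
    | zero => intro p hp; exact base p (by simpa using hp)
    | succ k ih =>
        intro p hp
        by_cases hb : b ≤ p + k
        · exact ih p hb
        · exact step p (ih (p + 1) (by push_cast at hp ⊢; omega))
  intro p
  exact H (b - p).toNat p (by have := Int.self_le_toNat (b - p); omega)

/-- Upward induction on integers. -/
lemma intAscend {P : ℤ → Prop} (a : ℤ) (base : ∀ p, p ≤ a → P p)
    (step : ∀ p, P (p - 1) → P p) : ∀ p, P p := by
  have := intDescend (P := fun p => P (-p)) (-a)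
    (fun p hp => base (-p) (by omega))
    (fun p hp => step (-p) (by rw [show -p - 1 = -(p+1) by ring]; exact hp))
  intro p
  have h2 := this (-p)
  simpa using h2
section Core

variable {V : Type*} [AddCommGroup V] [Module ℝ V]
variable (W : ℤ → Submodule ℝ V) (F : ℤ → Submodule ℂ (ℂ ⊗[ℝ] V))

/-- Image of `F^p ∩ W_n` in `Gr^W_n`, pulled back to `W_n ⊗ ℂ` (plus `W_{n-1} ⊗ ℂ`). -/
def XX (n p : ℤ) : Submodule ℂ (ℂ ⊗[ℝ] V) :=
  (F p ⊓ cx V (W n)) ⊔ cx V (W (n - 1))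

/-- Same for the conjugate filtration. -/
def YY (n q : ℤ) : Submodule ℂ (ℂ ⊗[ℝ] V) :=
  ((F q).map (conjC V) ⊓ cx V (W n)) ⊔ cx V (W (n - 1))

/-- The tail sums appearing in `Lpq`. -/
def TT (p q k : ℤ) : Submodule ℂ (ℂ ⊗[ℝ] V) :=
  ⨆ j : ℤ, ⨆ _ : k ≤ j, (cx V (W (p + q - j)) ⊓ (F (q - j + 1)).map (conjC V))

lemma Lpq_eq : Lpq W F p q = (cx V (W (p + q)) ⊓ (F q).map (conjC V)) ⊔ TT W F p q 2 := rfl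

variable {W F}

section OfMHS
variable (h : IsRMHS W F)

include h

lemma grInf (n p : ℤ) : XX W F n p ⊓ YY W F n (n + 1 - p) = cx V (W (n - 1)) :=
  h.gr_inf n p

lemma grSup (n p : ℤ) : XX W F n p ⊔ YY W F n (n + 1 - p) = cx V (W n) := by
  have hs := h.gr_sup n p
  simp only [XX, YY]
  apply le_antisymm
  · refine sup_le (sup_le ?_ ?_) ?_
    · exact le_trans le_sup_left hs.le
    · exact le_trans (le_trans le_sup_right le_sup_right) hs.le
    · exact le_trans le_sup_right hs.le
  · exact le_trans hs.ge (sup_le_sup_right le_sup_left _)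

omit h

end OfMHS

lemma CC_mono (h : IsRMHS W F) {m n : ℤ} (hmn : m ≤ n) : cx V (W m) ≤ cx V (W n) :=
  cx_mono (h.monoW hmn)

lemma XX_le_CC (n p : ℤ) (h : IsRMHS W F) : XX W F n p ≤ cx V (W n) :=
  sup_le inf_le_right (CC_mono h (by omega))

lemma YY_le_CC (n q : ℤ) (h : IsRMHS W F) : YY W F n q ≤ cx V (W n) :=
  sup_le inf_le_right (CC_mono h (by omega))

lemma XX_anti (h : IsRMHS W F) (n : ℤ) {p p' : ℤ} (hpp : p ≤ p') :
    XX W F n p' ≤ XX W F n p :=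
  sup_le_sup_right (inf_le_inf_right _ (h.antiF hpp)) _

lemma YY_anti (h : IsRMHS W F) (n : ℤ) {q q' : ℤ} (hqq : q ≤ q') :
    YY W F n q' ≤ YY W F n q :=
  sup_le_sup_right (inf_le_inf_right _ (Submodule.map_mono (h.antiF hqq))) _

lemma TT_le_CC (h : IsRMHS W F) (p q k : ℤ) : TT W F p q k ≤ cx V (W (p + q - k)) := by
  refine iSup₂_le fun j hj => ?_
  exact le_trans inf_le_left (CC_mono h (by omega))

lemma TT_anti_k (h : IsRMHS W F) (p q : ℤ) {k k' : ℤ} (hk : k ≤ k') :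
    TT W F p q k' ≤ TT W F p q k := by
  refine iSup₂_le fun j hj => ?_
  exact le_iSup₂ (f := fun j (_ : k ≤ j) => cx V (W (p + q - j)) ⊓ (F (q - j + 1)).map (conjC V))
    j (le_trans hk hj)

lemma TT_succ (p q k : ℤ) :
    TT W F p q k =
      (cx V (W (p + q - k)) ⊓ (F (q - k + 1)).map (conjC V)) ⊔ TT W F p q (k + 1) := by
  apply le_antisymm
  · refine iSup₂_le fun j hj => ?_
    rcases eq_or_lt_of_le hj with hjk | hjk
    · subst hjk; exact le_sup_left
    · exact le_trans (le_iSup₂ (f := fun j (_ : k + 1 ≤ j) =>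
        cx V (W (p + q - j)) ⊓ (F (q - j + 1)).map (conjC V)) j (by omega)) le_sup_right
  · refine sup_le ?_ ?_
    · exact le_iSup₂ (f := fun j (_ : k ≤ j) =>
        cx V (W (p + q - j)) ⊓ (F (q - j + 1)).map (conjC V)) k le_rfl
    · exact iSup₂_le fun j hj => le_iSup₂ (f := fun j (_ : k ≤ j) =>
        cx V (W (p + q - j)) ⊓ (F (q - j + 1)).map (conjC V)) j (by omega)

/-- `I^{p,q}` sits inside `W_{p+q} ⊗ ℂ`. -/
lemma Ipq_le_CC (p q : ℤ) : Ipq W F p q ≤ cx V (W (p + q)) :=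
  le_trans inf_le_left inf_le_left

lemma Ipq_le_F (p q : ℤ) : Ipq W F p q ≤ F p :=
  le_trans inf_le_left inf_le_right

lemma Ipq_le_XX (h : IsRMHS W F) (p q : ℤ) : Ipq W F p q ≤ XX W F (p + q) p :=
  le_trans (le_inf (Ipq_le_F p q) (Ipq_le_CC p q)) le_sup_left

lemma Ipq_le_YY (h : IsRMHS W F) (p q : ℤ) : Ipq W F p q ≤ YY W F (p + q) q := by
  refine le_trans inf_le_right ?_
  rw [Lpq_eq]
  refine sup_le (le_trans (le_of_eq (inf_comm _ _)) le_sup_left) ?_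
  exact le_trans (le_trans (TT_le_CC h p q 2) (CC_mono h (by omega))) le_sup_right

end Core
section Core2

variable {V : Type*} [AddCommGroup V] [Module ℝ V]
variable {W : ℤ → Submodule ℝ V} {F : ℤ → Submodule ℂ (ℂ ⊗[ℝ] V)}

/-- Descent claim: below weight `p+q`, everything decomposes into an `F^p`-part
and tails of conjugate pieces. -/
lemma claimL2 (h : IsRMHS W F) (p q : ℤ) :
    ∀ m, m ≤ p + q - 1 →
      cx V (W m) ≤ (F p ⊓ cx V (W m)) ⊔ TT W F p q (p + q - m) := by
  obtain ⟨a, ha⟩ := h.w_bot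
  refine intAscend a (fun m hm _ => ?_) (fun m ih hm => ?_)
  · rw [ha m hm, cx_bot]; exact bot_le
  · have l2 : cx V (W (m - 1)) ≤ (F p ⊓ cx V (W m)) ⊔ TT W F p q (p + q - m) := by
      refine le_trans (ih (by omega)) (sup_le ?_ ?_)
      · exact le_trans (inf_le_inf_left _ (CC_mono h (by omega))) le_sup_left
      · exact le_trans (TT_anti_k h p q (by omega)) le_sup_right
    have hs := grSup h m p
    refine le_trans hs.ge (sup_le ?_ ?_)
    · show (F p ⊓ cx V (W m)) ⊔ cx V (W (m - 1)) ≤ _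
      exact sup_le le_sup_left l2
    · show ((F (m + 1 - p)).map (conjC V) ⊓ cx V (W m)) ⊔ cx V (W (m - 1)) ≤ _
      refine sup_le ?_ l2
      have e1 : p + q - (p + q - m) = m := by ring
      have e2 : q - (p + q - m) + 1 = m + 1 - p := by ring
      have : cx V (W (p + q - (p + q - m))) ⊓ (F (q - (p + q - m) + 1)).map (conjC V) ≤
          TT W F p q (p + q - m) :=
        le_iSup₂ (f := fun j (_ : p + q - m ≤ j) =>
          cx V (W (p + q - j)) ⊓ (F (q - j + 1)).map (conjC V)) (p + q - m) le_rfl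
      rw [e1, e2] at this
      exact le_trans (le_of_eq (inf_comm _ _)) (le_trans this le_sup_right)

/-- Surjectivity: every class in `H^{p,q} ⊂ Gr_{p+q}` lifts to `I^{p,q}`. -/
lemma surjIpq (h : IsRMHS W F) (p q : ℤ) :
    XX W F (p + q) p ⊓ YY W F (p + q) q ≤ Ipq W F p q ⊔ cx V (W (p + q - 1)) := by
  intro v hv
  have hvX := (Submodule.mem_inf.mp hv).1
  have hvY := (Submodule.mem_inf.mp hv).2
  rw [XX, Submodule.mem_sup] at hvX
  obtain ⟨v₁, hv₁, c₁, hc₁, h1⟩ := hvX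
  rw [YY, Submodule.mem_sup] at hvY
  obtain ⟨v₂, hv₂, c₂, hc₂, h2⟩ := hvY
  have hw : v₁ - v₂ ∈ cx V (W (p + q - 1)) := by
    have h12 : v₁ + c₁ = v₂ + c₂ := by rw [h1, h2]
    have : v₁ - v₂ = c₂ - c₁ :=
      sub_eq_sub_iff_add_eq_add.mpr (h12.trans (add_comm _ _))
    rw [this]
    exact Submodule.sub_mem _ hc₂ hc₁
  have hcl := claimL2 h p q (p + q - 1) (by omega) hw
  rw [show p + q - (p + q - 1) = 1 by ring, Submodule.mem_sup] at hcl
  obtain ⟨x, hx, u, hu, hxu⟩ := hcl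
  set v' := v₁ - x with hv'
  have hv'F : v' ∈ F p := Submodule.sub_mem _ hv₁.1 hx.1
  have hv'C : v' ∈ cx V (W (p + q)) :=
    Submodule.sub_mem _ hv₁.2 (CC_mono h (by omega) hx.2)
  have hv'L : v' ∈ Lpq W F p q := by
    rw [Lpq_eq]
    have hv2' : v₂ ∈ (cx V (W (p + q)) ⊓ (F q).map (conjC V)) ⊔ TT W F p q 2 :=
      Submodule.mem_sup_left ⟨hv₂.2, hv₂.1⟩
    have hu' : u ∈ (cx V (W (p + q)) ⊓ (F q).map (conjC V)) ⊔ TT W F p q 2 := by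
      have := (TT_succ (W := W) (F := F) p q 1).le hu
      rw [show q - 1 + 1 = q by ring] at this
      exact sup_le_sup_right (inf_le_inf_right _ (CC_mono h (by omega))) _ this
    have hveq : v' = v₂ + u := by
      rw [hv']
      have : u = v₁ - v₂ - x := by rw [← hxu]; abel
      rw [this]
      abel
    rw [hveq]
    exact Submodule.add_mem _ hv2' hu'
  have hvsum : v = v' + (x + c₁) := by
    rw [hv']
    have : v₁ - x + (x + c₁) = v₁ + c₁ := by abel
    rw [this, h1]
  rw [hvsum]
  exact Submodule.add_mem _
    (Submodule.mem_sup_left ⟨⟨hv'C, hv'F⟩, hv'L⟩)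
    (Submodule.mem_sup_right (Submodule.add_mem _ hx.2 hc₁))

end Core2
section Core3

variable {V : Type*} [AddCommGroup V] [Module ℝ V]
variable {W : ℤ → Submodule ℝ V} {F : ℤ → Submodule ℂ (ℂ ⊗[ℝ] V)}

/-- Hodge decomposition of `Gr_n` driven by the `F`-filtration. -/
lemma decompF (h : IsRMHS W F) (n : ℤ) :
    ∀ p, XX W F n p ≤
      (⨆ r, ⨆ _ : p ≤ r, (XX W F n r ⊓ YY W F n (n - r))) ⊔ cx V (W (n - 1)) := by
  obtain ⟨bF, hbF⟩ := h.f_bot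
  refine intDescend bF (fun p hp => ?_) (fun p ih => ?_)
  · refine sup_le (le_trans inf_le_left ?_) le_sup_right
    rw [hbF p hp]
    exact bot_le
  · have hs' : XX W F n (p + 1) ⊔ YY W F n (n - p) = cx V (W n) := by
      have hs := grSup h n (p + 1)
      rw [show n + 1 - (p + 1) = n - p by ring] at hs
      exact hs
    have key : XX W F n p = XX W F n (p + 1) ⊔ (YY W F n (n - p) ⊓ XX W F n p) := by
      calc XX W F n p = (XX W F n (p + 1) ⊔ YY W F n (n - p)) ⊓ XX W F n p := by
            rw [hs']
            exact (inf_eq_right.mpr (XX_le_CC n p h)).symm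
        _ = XX W F n (p + 1) ⊔ (YY W F n (n - p) ⊓ XX W F n p) :=
            sup_inf_assoc_of_le _ (XX_anti h n (by omega))
    rw [key]
    refine sup_le ?_ ?_
    · refine le_trans ih (sup_le_sup_right ?_ _)
      exact iSup₂_le fun r hr => le_iSup₂
        (f := fun r (_ : p ≤ r) => XX W F n r ⊓ YY W F n (n - r)) r (by omega)
    · refine le_trans (le_of_eq (inf_comm _ _)) ?_
      exact le_trans (le_iSup₂
        (f := fun r (_ : p ≤ r) => XX W F n r ⊓ YY W F n (n - r)) p le_rfl) le_sup_left

/-- Independence of the `H^{p,q}` inside `Gr_n`. -/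
lemma indepGr (h : IsRMHS W F) (n p : ℤ) :
    (XX W F n p ⊓ YY W F n (n - p)) ⊓
      ((⨆ r, ⨆ _ : r ≠ p, (XX W F n r ⊓ YY W F n (n - r))) ⊔ cx V (W (n - 1)))
    ≤ cx V (W (n - 1)) := by
  have hZ : (⨆ r, ⨆ _ : r ≠ p, (XX W F n r ⊓ YY W F n (n - r))) ⊔ cx V (W (n - 1)) ≤
      XX W F n (p + 1) ⊔ YY W F n (n + 1 - p) := by
    refine sup_le (iSup₂_le fun r hr => ?_) ?_
    · rcases lt_or_gt_of_ne hr with hlt | hgt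
      · exact le_trans inf_le_right
          (le_trans (YY_anti h n (show n + 1 - p ≤ n - r by omega)) le_sup_right)
      · exact le_trans inf_le_left
          (le_trans (XX_anti h n (show p + 1 ≤ r by omega)) le_sup_left)
    · exact le_trans le_sup_right le_sup_left
  refine le_trans (inf_le_inf_left _ hZ) ?_
  have h1 : YY W F n (n - p) ⊓ (XX W F n (p + 1) ⊔ YY W F n (n + 1 - p)) =
      YY W F n (n + 1 - p) := by
    rw [inf_comm, sup_comm]
    rw [sup_inf_assoc_of_le _ (YY_anti h n (show n - p ≤ n + 1 - p by omega))]
    have hgi : XX W F n (p + 1) ⊓ YY W F n (n - p) = cx V (W (n - 1)) := by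
      have := grInf h n (p + 1)
      rw [show n + 1 - (p + 1) = n - p by ring] at this
      exact this
    rw [hgi]
    exact sup_eq_left.mpr le_sup_right
  rw [inf_assoc, h1]
  exact (grInf h n p).le

/-- Injectivity: `I^{p,q} ∩ (W_{p+q-1} ⊗ ℂ) = 0`. -/
lemma Ipq_inf_CC_step (h : IsRMHS W F) (p q : ℤ) :
    ∀ m, m ≤ p + q - 1 → Ipq W F p q ⊓ cx V (W m) ≤ cx V (W (m - 1)) := by
  intro m hm
  have hL : Lpq W F p q ≤
      ((F (q - (p + q - m) + 1)).map (conjC V) ⊓ cx V (W (p + q))) ⊔ cx V (W (m - 1)) := by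
    rw [Lpq_eq]
    refine sup_le ?_ (iSup₂_le fun j hj => ?_)
    · refine le_trans ?_ le_sup_left
      exact le_inf (le_trans inf_le_right (Submodule.map_mono (h.antiF (by omega))))
        inf_le_left
    · by_cases hjk : j ≤ p + q - m
      · refine le_trans ?_ le_sup_left
        exact le_inf (le_trans inf_le_right (Submodule.map_mono (h.antiF (by omega))))
          (le_trans inf_le_left (CC_mono h (by omega)))
      · exact le_trans inf_le_left (le_trans (CC_mono h (by omega)) le_sup_right)
  intro v hv
  have hvI := (Submodule.mem_inf.mp hv).1
  have hvC := (Submodule.mem_inf.mp hv).2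
  have hvX : v ∈ XX W F m p :=
    Submodule.mem_sup_left (Submodule.mem_inf.mpr ⟨Ipq_le_F p q hvI, hvC⟩)
  have hvY : v ∈ YY W F m (m + 1 - p) := by
    have hvL : v ∈ ((F (q - (p + q - m) + 1)).map (conjC V) ⊓ cx V (W (p + q))) ⊔
        cx V (W (m - 1)) := hL (inf_le_right (a := Rpq W F p q) hvI)
    rw [Submodule.mem_sup] at hvL
    obtain ⟨g, hg, c, hc, hgc⟩ := hvL
    have hgm : g ∈ cx V (W m) := by
      have : g = v - c := by rw [← hgc]; abel
      rw [this]
      exact Submodule.sub_mem _ hvC (CC_mono h (by omega) hc)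
    rw [show m + 1 - p = q - (p + q - m) + 1 by ring]
    exact Submodule.mem_sup.mpr ⟨g, Submodule.mem_inf.mpr ⟨(Submodule.mem_inf.mp hg).1, hgm⟩,
      c, hc, hgc⟩
  have := grInf h m p
  rw [← this]
  exact Submodule.mem_inf.mpr ⟨hvX, hvY⟩

lemma Ipq_inf_CC_bot (h : IsRMHS W F) (p q : ℤ) :
    Ipq W F p q ⊓ cx V (W (p + q - 1)) = ⊥ := by
  obtain ⟨a, ha⟩ := h.w_bot
  have key : ∀ m, Ipq W F p q ⊓ cx V (W (p + q - 1)) ≤ cx V (W m) := by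
    refine intDescend (p + q - 1) (fun m hm => le_trans inf_le_right (CC_mono h hm))
      (fun m ih => ?_)
    by_cases hm : m + 1 ≤ p + q - 1
    · have : Ipq W F p q ⊓ cx V (W (p + q - 1)) ≤ Ipq W F p q ⊓ cx V (W (m + 1)) :=
        le_inf inf_le_left ih
      refine le_trans this ?_
      have := Ipq_inf_CC_step h p q (m + 1) hm
      rw [show m + 1 - 1 = m by ring] at this
      exact this
    · exact le_trans inf_le_right (CC_mono h (by omega))
  rw [← le_bot_iff]
  refine le_trans (key a) ?_
  rw [ha a le_rfl, cx_bot]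

end Core3
section Core4

variable {V : Type*} [AddCommGroup V] [Module ℝ V]
variable {W : ℤ → Submodule ℝ V} {F : ℤ → Submodule ℂ (ℂ ⊗[ℝ] V)}

/-- `W_n ⊗ ℂ` is covered by the `I^{p,q}` with `p + q ≤ n`. -/
lemma CC_le_iSup (h : IsRMHS W F) :
    ∀ n, cx V (W n) ≤ ⨆ z : ℤ × ℤ, ⨆ _ : z.1 + z.2 ≤ n, Ipq W F z.1 z.2 := by
  obtain ⟨a, ha⟩ := h.w_bot
  obtain ⟨aF, haF⟩ := h.f_top
  refine intAscend a (fun n hn => ?_) (fun n ih => ?_)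
  · rw [ha n hn, cx_bot]; exact bot_le
  · have h0 : cx V (W n) ≤ XX W F n aF := by
      rw [XX, haF aF le_rfl, top_inf_eq]
      exact le_sup_left
    refine le_trans h0 (le_trans (decompF h n aF) (sup_le (iSup₂_le fun r _ => ?_) ?_))
    · have hs := surjIpq h r (n - r)
      rw [show r + (n - r) = n by ring] at hs
      refine le_trans hs (sup_le ?_ ?_)
      · exact le_iSup₂ (f := fun z : ℤ × ℤ => fun _ : z.1 + z.2 ≤ n => Ipq W F z.1 z.2)
          (r, n - r) (by simp)
      · refine le_trans ih (iSup₂_le fun z hz => ?_)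
        exact le_iSup₂ (f := fun z : ℤ × ℤ => fun _ : z.1 + z.2 ≤ n => Ipq W F z.1 z.2)
          z (by omega)
    · refine le_trans ih (iSup₂_le fun z hz => ?_)
      exact le_iSup₂ (f := fun z : ℤ × ℤ => fun _ : z.1 + z.2 ≤ n => Ipq W F z.1 z.2)
        z (by omega)

/-- `F^a` is covered by the `I^{p,q}` with `p ≥ a`. -/
lemma F_le_iSup (h : IsRMHS W F) (a : ℤ) :
    F a ≤ ⨆ z : ℤ × ℤ, ⨆ _ : a ≤ z.1, Ipq W F z.1 z.2 := by
  obtain ⟨aW, haW⟩ := h.w_bot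
  have key : ∀ n, F a ⊓ cx V (W n) ≤
      ⨆ z : ℤ × ℤ, ⨆ _ : a ≤ z.1, Ipq W F z.1 z.2 := by
    refine intAscend aW (fun n hn => ?_) (fun n ih => ?_)
    · rw [haW n hn, cx_bot, inf_bot_eq]; exact bot_le
    · intro v hv
      have hvF := (Submodule.mem_inf.mp hv).1
      have hvC := (Submodule.mem_inf.mp hv).2
      have h1 : v ∈ XX W F n a := Submodule.mem_sup_left (Submodule.mem_inf.mpr ⟨hvF, hvC⟩)
      have h2 := decompF h n a h1
      have h3 : v ∈ (⨆ r, ⨆ _ : a ≤ r, Ipq W F r (n - r)) ⊔ cx V (W (n - 1)) := by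
        have hle : (⨆ r, ⨆ _ : a ≤ r, (XX W F n r ⊓ YY W F n (n - r))) ⊔ cx V (W (n - 1)) ≤
            (⨆ r, ⨆ _ : a ≤ r, Ipq W F r (n - r)) ⊔ cx V (W (n - 1)) := by
          refine sup_le (iSup₂_le fun r hr => ?_) le_sup_right
          have hs := surjIpq h r (n - r)
          rw [show r + (n - r) = n by ring] at hs
          refine le_trans hs (sup_le ?_ le_sup_right)
          exact le_trans (le_iSup₂ (f := fun r : ℤ => fun _ : a ≤ r => Ipq W F r (n - r))
            r hr) le_sup_left
        exact hle h2
      rw [Submodule.mem_sup] at h3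
      obtain ⟨i, hi, c, hc, hic⟩ := h3
      have hiRHS : i ∈ ⨆ z : ℤ × ℤ, ⨆ _ : a ≤ z.1, Ipq W F z.1 z.2 := by
        refine (iSup₂_le fun r hr => ?_ : (⨆ r, ⨆ _ : a ≤ r, Ipq W F r (n - r)) ≤ _) hi
        exact le_iSup₂ (f := fun z : ℤ × ℤ => fun _ : a ≤ z.1 => Ipq W F z.1 z.2) (r, n - r) hr
      have hiF : i ∈ F a := by
        refine (iSup₂_le fun r hr => ?_ : (⨆ r, ⨆ _ : a ≤ r, Ipq W F r (n - r)) ≤ F a) hi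
        exact le_trans (Ipq_le_F r (n - r)) (h.antiF hr)
      have hcF : c ∈ F a ⊓ cx V (W (n - 1)) := by
        refine Submodule.mem_inf.mpr ⟨?_, hc⟩
        have : c = v - i := by rw [← hic]; abel
        rw [this]
        exact Submodule.sub_mem _ hvF hiF
      have := ih hcF
      rw [← hic]
      exact Submodule.add_mem _ hiRHS this
  obtain ⟨b, hb⟩ := h.w_top
  intro v hv
  exact key b (Submodule.mem_inf.mpr ⟨hv, by rw [hb b le_rfl, cx_top]; trivial⟩)

/-- Vanishing of components: the `I^{p,q}` are independent. -/
lemma components_zero (h : IsRMHS W F) :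
    ∀ g : ℤ × ℤ →₀ ℂ ⊗[ℝ] V, (∀ z, g z ∈ Ipq W F z.1 z.2) →
      (g.sum fun _ v => v) = 0 → g = 0 := by
  obtain ⟨a, ha⟩ := h.w_bot
  suffices H : ∀ N : ℤ, ∀ g : ℤ × ℤ →₀ ℂ ⊗[ℝ] V, (∀ z, g z ∈ Ipq W F z.1 z.2) →
      (∀ z ∈ g.support, z.1 + z.2 ≤ N) → (g.sum fun _ v => v) = 0 → g = 0 by
    intro g hg hsum
    rcases g.support.eq_empty_or_nonempty with he | hne
    · exact Finsupp.support_eq_empty.mp he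
    · exact H (g.support.sup' hne fun z => z.1 + z.2) g hg
        (fun z hz => Finset.le_sup' (fun z : ℤ × ℤ => z.1 + z.2) hz) hsum
  refine intAscend a (fun N hN => ?_) (fun N ih => ?_)
  · intro g hg hb _
    ext z
    by_cases hz : z ∈ g.support
    · have hbot : Ipq W F z.1 z.2 ≤ ⊥ := by
        refine le_trans (Ipq_le_CC z.1 z.2) ?_
        rw [ha _ (le_trans (hb z hz) hN), cx_bot]
      simpa using hbot (hg z)
    · simpa using Finsupp.notMem_support_iff.mp hz
  · intro g hg hb hsum
    have hzero : ∀ z : ℤ × ℤ, z.1 + z.2 = N → g z = 0 := by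
      intro y₀ hy₀
      by_cases hy : y₀ ∈ g.support
      swap
      · exact Finsupp.notMem_support_iff.mp hy
      have hsum' : g y₀ + ∑ y ∈ g.support.erase y₀, g y = 0 := by
        rw [Finset.add_sum_erase _ _ hy]
        rw [Finsupp.sum] at hsum
        exact hsum
      have hmem : g y₀ ∈ (⨆ r, ⨆ _ : r ≠ y₀.1, (XX W F N r ⊓ YY W F N (N - r))) ⊔
          cx V (W (N - 1)) := by
        have hneg : g y₀ = -∑ y ∈ g.support.erase y₀, g y := by
          rw [eq_neg_iff_add_eq_zero]
          exact hsum'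
        rw [hneg]
        refine Submodule.neg_mem _ (Submodule.sum_mem _ fun y hy' => ?_)
        have hy'supp := Finset.mem_of_mem_erase hy'
        have hyne : y ≠ y₀ := Finset.ne_of_mem_erase hy'
        by_cases hw : y.1 + y.2 = N
        · have hne1 : y.1 ≠ y₀.1 := by
            intro he
            exact hyne (Prod.ext he (by omega))
          refine Submodule.mem_sup_left ?_
          have h1 := Ipq_le_XX h y.1 y.2 (hg y)
          have h2 := Ipq_le_YY h y.1 y.2 (hg y)
          rw [hw] at h1 h2
          rw [show y.2 = N - y.1 by omega] at h2
          exact le_iSup₂ (f := fun r : ℤ => fun _ : r ≠ y₀.1 =>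
            XX W F N r ⊓ YY W F N (N - r)) y.1 hne1 (Submodule.mem_inf.mpr ⟨h1, h2⟩)
        · have hle : y.1 + y.2 ≤ N - 1 := by
            have := hb y hy'supp
            omega
          exact Submodule.mem_sup_right (CC_mono h hle (Ipq_le_CC y.1 y.2 (hg y)))
      have hXYy₀ : g y₀ ∈ XX W F N y₀.1 ⊓ YY W F N (N - y₀.1) := by
        have h1 := Ipq_le_XX h y₀.1 y₀.2 (hg y₀)
        have h2 := Ipq_le_YY h y₀.1 y₀.2 (hg y₀)
        rw [hy₀] at h1 h2
        rw [show y₀.2 = N - y₀.1 by omega] at h2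
        exact Submodule.mem_inf.mpr ⟨h1, h2⟩
      have hC : g y₀ ∈ cx V (W (N - 1)) :=
        indepGr h N y₀.1 (Submodule.mem_inf.mpr ⟨hXYy₀, hmem⟩)
      have hfin : g y₀ ∈ Ipq W F y₀.1 y₀.2 ⊓ cx V (W (y₀.1 + y₀.2 - 1)) := by
        refine Submodule.mem_inf.mpr ⟨hg y₀, ?_⟩
        rw [show y₀.1 + y₀.2 - 1 = N - 1 by omega]
        exact hC
      rw [Ipq_inf_CC_bot h] at hfin
      simpa using hfin
    refine ih g hg (fun z hz => ?_) hsum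
    have h1 := hb z hz
    rcases eq_or_lt_of_le h1 with he | hlt
    · exact absurd (hzero z he) (Finsupp.mem_support_iff.mp hz)
    · omega

end Core4
section Morph

variable {V : Type*} [AddCommGroup V] [Module ℝ V]
variable {V' : Type*} [AddCommGroup V'] [Module ℝ V']
variable {W : ℤ → Submodule ℝ V} {F : ℤ → Submodule ℂ (ℂ ⊗[ℝ] V)}
variable {W' : ℤ → Submodule ℝ V'} {F' : ℤ → Submodule ℂ (ℂ ⊗[ℝ] V')}
variable {f : V →ₗ[ℝ] V'}

lemma map_CC_le (hfW : ∀ i : ℤ, (W i).map f ≤ W' i) (n : ℤ) :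
    (cx V (W n)).map (f.baseChange ℂ) ≤ cx V' (W' n) := by
  rw [map_cx]
  exact cx_mono (hfW n)

lemma map_G_le (hfF : ∀ p : ℤ, (F p).map (f.baseChange ℂ) ≤ F' p) (q : ℤ) :
    ((F q).map (conjC V)).map (f.baseChange ℂ) ≤ (F' q).map (conjC V') := by
  rintro x ⟨y, ⟨u, hu, rfl⟩, rfl⟩
  exact ⟨f.baseChange ℂ u, hfF q ⟨u, hu, rfl⟩, (baseChange_conjC f u).symm⟩

lemma map_Ipq_le (hfW : ∀ i : ℤ, (W i).map f ≤ W' i)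
    (hfF : ∀ p : ℤ, (F p).map (f.baseChange ℂ) ≤ F' p) (p q : ℤ) :
    (Ipq W F p q).map (f.baseChange ℂ) ≤ Ipq W' F' p q := by
  refine le_trans (Submodule.map_inf_le _) (inf_le_inf ?_ ?_)
  · refine le_trans (Submodule.map_inf_le _) (inf_le_inf ?_ ?_)
    · exact map_CC_le hfW (p + q)
    · exact hfF p
  · rw [Lpq_eq, Lpq_eq, Submodule.map_sup]
    refine sup_le ?_ ?_
    · refine le_trans (le_trans (Submodule.map_inf_le _)
        (inf_le_inf (map_CC_le hfW (p + q)) (map_G_le hfF q))) le_sup_left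
    · rw [TT, Submodule.map_iSup]
      refine le_trans ?_ le_sup_right
      refine iSup_le fun j => ?_
      rw [Submodule.map_iSup]
      refine iSup_le fun hj => ?_
      refine le_trans (le_trans (Submodule.map_inf_le _)
        (inf_le_inf (map_CC_le hfW _) (map_G_le hfF _))) ?_
      exact le_iSup₂ (f := fun j (_ : (2:ℤ) ≤ j) =>
        cx V' (W' (p + q - j)) ⊓ (F' (q - j + 1)).map (conjC V')) j hj

end Morph
end MHS

open MHS in
/-- A morphism of `ℝ`-mixed Hodge structures is strictly
compatible with both the weight and the Hodge filtrations:
`f(V) ∩ W'_i = f(W_i)` and `f_ℂ(V_ℂ) ∩ F'^p = f_ℂ(F^p)`. -/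
theorem morphism_strictly_compatible
    (V V' : Type*) [AddCommGroup V] [Module ℝ V] [FiniteDimensional ℝ V]
    [AddCommGroup V'] [Module ℝ V'] [FiniteDimensional ℝ V']
    (W : ℤ → Submodule ℝ V) (F : ℤ → Submodule ℂ (ℂ ⊗[ℝ] V))
    (W' : ℤ → Submodule ℝ V') (F' : ℤ → Submodule ℂ (ℂ ⊗[ℝ] V'))
    (h : MHS.IsRMHS W F) (h' : MHS.IsRMHS W' F')
    (f : V →ₗ[ℝ] V')
    (hfW : ∀ i : ℤ, (W i).map f ≤ W' i)
    (hfF : ∀ p : ℤ, (F p).map (f.baseChange ℂ) ≤ F' p) :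
    (∀ i : ℤ, LinearMap.range f ⊓ W' i = (W i).map f) ∧
    (∀ p : ℤ, LinearMap.range (f.baseChange ℂ) ⊓ F' p =
      (F p).map (f.baseChange ℂ)) := by
  set fC := f.baseChange ℂ with hfC
  -- decompose any element of `ℂ ⊗ V` into Deligne components
  obtain ⟨b, hb⟩ := h.w_top
  have hTop : ∀ y : ℂ ⊗[ℝ] V, y ∈ ⨆ z : ℤ × ℤ, Ipq W F z.1 z.2 := by
    intro y
    have hy : y ∈ cx V (W b) := by rw [hb b le_rfl, cx_top]; trivial
    have h1 := CC_le_iSup h b hy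
    exact (iSup₂_le fun z _ =>
      le_iSup (fun z : ℤ × ℤ => Ipq W F z.1 z.2) z) h1
  constructor
  · -- weight filtration strictness
    intro i
    apply le_antisymm
    · rintro x hx
      obtain ⟨hr, hW⟩ := Submodule.mem_inf.mp hx
      obtain ⟨v, rfl⟩ := hr
      obtain ⟨g, hg, hgsum⟩ :=
        (Submodule.mem_iSup_iff_exists_finsupp _ _).mp (hTop ((1 : ℂ) ⊗ₜ[ℝ] v))
      have hx' : (1 : ℂ) ⊗ₜ[ℝ] (f v) ∈
          ⨆ z : ℤ × ℤ, ⨆ _ : z.1 + z.2 ≤ i, Ipq W' F' z.1 z.2 :=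
        CC_le_iSup h' i (tmul_mem_cx hW)
      obtain ⟨g', hg', hg'sum⟩ := (Submodule.mem_iSup_iff_exists_finsupp _ _).mp hx'
      have hg'mem : ∀ z : ℤ × ℤ, g' z ∈ Ipq W' F' z.1 z.2 ∧
          (¬ z.1 + z.2 ≤ i → g' z = 0) := by
        intro z
        by_cases hz : z.1 + z.2 ≤ i
        · have := hg' z; rw [iSup_pos hz] at this; exact ⟨this, fun hn => absurd hz hn⟩
        · have := hg' z; rw [iSup_neg hz] at this
          exact ⟨by rw [(Submodule.mem_bot ℂ).mp this]; exact Submodule.zero_mem _,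
            fun _ => (Submodule.mem_bot ℂ).mp this⟩
      set d : ℤ × ℤ →₀ ℂ ⊗[ℝ] V' :=
        Finsupp.mapRange (⇑fC) (map_zero fC) g - g' with hd
      have hdmem : ∀ z, d z ∈ Ipq W' F' z.1 z.2 := by
        intro z
        rw [hd]
        simp only [Finsupp.sub_apply, Finsupp.mapRange_apply]
        exact Submodule.sub_mem _ (map_Ipq_le hfW hfF z.1 z.2 ⟨g z, hg z, rfl⟩)
          (hg'mem z).1
      have hdsum : (d.sum fun _ v => v) = 0 := by
        rw [hd, Finsupp.sum_sub_index (fun _ _ _ => rfl)]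
        rw [Finsupp.sum_mapRange_index (fun _ => rfl)]
        have : (g.sum fun _ b => fC b) = fC (g.sum fun _ b => b) :=
          (map_finsuppSum fC g _).symm
        rw [this, hgsum, hg'sum, LinearMap.baseChange_tmul]
        exact sub_self _
      have hdz := components_zero h' d hdmem hdsum
      have hcomp : ∀ z : ℤ × ℤ, fC (g z) = g' z := by
        intro z
        have : d z = 0 := by rw [hdz]; rfl
        rw [hd] at this
        simpa [sub_eq_zero] using this
      -- the truncated sum
      set s := g.support.filter (fun z : ℤ × ℤ => z.1 + z.2 ≤ i) with hs
      set u := ∑ z ∈ s, g z with hu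
      have huW : u ∈ cx V (W i) := by
        refine Submodule.sum_mem _ fun z hz => ?_
        rw [hs, Finset.mem_filter] at hz
        exact CC_mono h hz.2 (Ipq_le_CC z.1 z.2 (hg z))
      have hfu : fC u = (1 : ℂ) ⊗ₜ[ℝ] (f v) := by
        rw [hu, map_sum]
        have heq : ∑ z ∈ s, fC (g z) = ∑ z ∈ g.support, fC (g z) := by
          rw [hs]
          refine Finset.sum_filter_of_ne fun z hz hne => ?_
          by_contra hgt
          exact hne (by rw [hcomp z, (hg'mem z).2 hgt])
        rw [heq, ← map_sum]
        rw [Finsupp.sum] at hgsum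
        rw [hgsum, LinearMap.baseChange_tmul]
      have hmem2 : (1 : ℂ) ⊗ₜ[ℝ] (f v) ∈ cx V' ((W i).map f) := by
        rw [← map_cx f (W i)]
        exact ⟨u, huW, hfu⟩
      exact tmul_one_mem_cx_iff.mp hmem2
    · exact le_inf (LinearMap.map_le_range) (hfW i)
  · -- Hodge filtration strictness
    intro p
    apply le_antisymm
    · rintro x hx
      obtain ⟨hr, hF⟩ := Submodule.mem_inf.mp hx
      obtain ⟨y, rfl⟩ := hr
      obtain ⟨g, hg, hgsum⟩ :=
        (Submodule.mem_iSup_iff_exists_finsupp _ _).mp (hTop y)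
      have hx' : fC y ∈ ⨆ z : ℤ × ℤ, ⨆ _ : p ≤ z.1, Ipq W' F' z.1 z.2 :=
        F_le_iSup h' p hF
      obtain ⟨g', hg', hg'sum⟩ := (Submodule.mem_iSup_iff_exists_finsupp _ _).mp hx'
      have hg'mem : ∀ z : ℤ × ℤ, g' z ∈ Ipq W' F' z.1 z.2 ∧
          (¬ p ≤ z.1 → g' z = 0) := by
        intro z
        by_cases hz : p ≤ z.1
        · have := hg' z; rw [iSup_pos hz] at this; exact ⟨this, fun hn => absurd hz hn⟩
        · have := hg' z; rw [iSup_neg hz] at this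
          exact ⟨by rw [(Submodule.mem_bot ℂ).mp this]; exact Submodule.zero_mem _,
            fun _ => (Submodule.mem_bot ℂ).mp this⟩
      set d : ℤ × ℤ →₀ ℂ ⊗[ℝ] V' :=
        Finsupp.mapRange (⇑fC) (map_zero fC) g - g' with hd
      have hdmem : ∀ z, d z ∈ Ipq W' F' z.1 z.2 := by
        intro z
        rw [hd]
        simp only [Finsupp.sub_apply, Finsupp.mapRange_apply]
        exact Submodule.sub_mem _ (map_Ipq_le hfW hfF z.1 z.2 ⟨g z, hg z, rfl⟩)
          (hg'mem z).1
      have hdsum : (d.sum fun _ v => v) = 0 := by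
        rw [hd, Finsupp.sum_sub_index (fun _ _ _ => rfl)]
        rw [Finsupp.sum_mapRange_index (fun _ => rfl)]
        have : (g.sum fun _ b => fC b) = fC (g.sum fun _ b => b) :=
          (map_finsuppSum fC g _).symm
        rw [this, hgsum, hg'sum]
        exact sub_self _
      have hdz := components_zero h' d hdmem hdsum
      have hcomp : ∀ z : ℤ × ℤ, fC (g z) = g' z := by
        intro z
        have : d z = 0 := by rw [hdz]; rfl
        rw [hd] at this
        simpa [sub_eq_zero] using this
      set s := g.support.filter (fun z : ℤ × ℤ => p ≤ z.1) with hs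
      set u := ∑ z ∈ s, g z with hu
      have huF : u ∈ F p := by
        refine Submodule.sum_mem _ fun z hz => ?_
        rw [hs, Finset.mem_filter] at hz
        exact h.antiF hz.2 (Ipq_le_F z.1 z.2 (hg z))
      have hfu : fC u = fC y := by
        rw [hu, map_sum]
        have heq : ∑ z ∈ s, fC (g z) = ∑ z ∈ g.support, fC (g z) := by
          rw [hs]
          refine Finset.sum_filter_of_ne fun z hz hne => ?_
          by_contra hgt
          exact hne (by rw [hcomp z, (hg'mem z).2 hgt])
        rw [heq, ← map_sum]
        rw [Finsupp.sum] at hgsum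
        rw [hgsum]
      exact ⟨u, huF, hfu⟩
    · exact le_inf (LinearMap.map_le_range) (hfF p)
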